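/- Fix λ > 0, n ≥ k ≥ 1, an m×n matrix Y and an m×p matrix X, and let (S⁽ʲ⁾, V⁽ʲ⁾), j ≥ 1, be a sequence in ℝ^{p×k} × 𝕆^{n×k} such that for every j, S⁽ʲ⁺¹⁾ globally minimizes S ↦ ½‖Y V⁽ʲ⁾ − XS‖²_F + λ‖S‖_{2,1} over ℝ^{p×k} and V⁽ʲ⁺¹⁾ globally maximizes V ↦ tr((Y′XS⁽ʲ⁺¹⁾)′V) over 𝕆^{n×k}, starting from an arbitrary V⁽⁰⁾ ∈ 𝕆^{n×k}. Then for every j ≥ 1, λ‖S⁽ʲ⁾‖_{2,1} ≤ ½‖Y‖²_F; in particular, the sequences S⁽ʲ⁾, V⁽ʲ⁾ and B⁽ʲ⁾ = S⁽ʲ⁾(V⁽ʲ⁾)′ are uniformly bounded in j. -/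
import Mathlib


open Matrix Finset Filter Topology

noncomputable section

/-- Squared Frobenius norm of a matrix. -/
def frobSq {m n : ℕ} (M : Matrix (Fin m) (Fin n) ℝ) : ℝ := ∑ i, ∑ j, (M i j) ^ 2

/-- Frobenius norm. -/
def frobNorm {m n : ℕ} (M : Matrix (Fin m) (Fin n) ℝ) : ℝ := Real.sqrt (frobSq M)

/-- Euclidean norm of a vector. -/
def eNorm {n : ℕ} (v : Fin n → ℝ) : ℝ := Real.sqrt (∑ j, (v j) ^ 2)

/-- Sum of the Euclidean norms of the rows, `‖S‖_{2,1}`. -/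
def norm21 {p n : ℕ} (B : Matrix (Fin p) (Fin n) ℝ) : ℝ := ∑ i, eNorm (B i)

/-- `V` has orthonormal columns: `V ∈ 𝕆^{n×k}`. -/
def IsOrthCol {n k : ℕ} (V : Matrix (Fin n) (Fin k) ℝ) : Prop := Vᵀ * V = 1

/-- The objective `F(S, V) = ½‖Y − XSV′‖²_F + λ‖S‖_{2,1}`. -/
def Fobj {m n p k : ℕ} (Y : Matrix (Fin m) (Fin n) ℝ) (X : Matrix (Fin m) (Fin p) ℝ)
    (lam : ℝ) (S : Matrix (Fin p) (Fin k) ℝ) (V : Matrix (Fin n) (Fin k) ℝ) : ℝ :=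
  (1 / 2) * frobSq (Y - X * S * Vᵀ) + lam * norm21 S

lemma frobSq_nonneg {m n : ℕ} (M : Matrix (Fin m) (Fin n) ℝ) : 0 ≤ frobSq M := by
  apply Finset.sum_nonneg; intro i _; apply Finset.sum_nonneg; intro j _; positivity

lemma frobSq_eq_trace {m n : ℕ} (M : Matrix (Fin m) (Fin n) ℝ) :
    frobSq M = (Mᵀ * M).trace := by
  simp only [frobSq, Matrix.trace, Matrix.diag, Matrix.mul_apply, Matrix.transpose_apply, sq]
  exact Finset.sum_comm

lemma norm21_zero {p n : ℕ} : norm21 (0 : Matrix (Fin p) (Fin n) ℝ) = 0 := by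
  simp [norm21, eNorm]

lemma norm21_nonneg {p n : ℕ} (B : Matrix (Fin p) (Fin n) ℝ) : 0 ≤ norm21 B := by
  apply Finset.sum_nonneg; intro i _; exact Real.sqrt_nonneg _

/-- If `VᵀV = 1`, then `‖YV‖_F² ≤ ‖Y‖_F²`. -/
lemma frobSq_mul_orth_le {m n k : ℕ} (Y : Matrix (Fin m) (Fin n) ℝ)
    (V : Matrix (Fin n) (Fin k) ℝ) (hV : Vᵀ * V = 1) : frobSq (Y * V) ≤ frobSq Y := by
  have key : frobSq Y - frobSq (Y * V) = frobSq (Y - Y * V * Vᵀ) := by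
    rw [frobSq_eq_trace, frobSq_eq_trace, frobSq_eq_trace]
    have expand : (Y - Y * V * Vᵀ)ᵀ * (Y - Y * V * Vᵀ) =
        Yᵀ * Y - Yᵀ * (Y * V * Vᵀ) - (Y * V * Vᵀ)ᵀ * Y +
          (Y * V * Vᵀ)ᵀ * (Y * V * Vᵀ) := by
      rw [Matrix.transpose_sub, Matrix.sub_mul, Matrix.mul_sub, Matrix.mul_sub]
      abel
    rw [expand]
    have h1 : (Yᵀ * (Y * V * Vᵀ)).trace = ((Y * V)ᵀ * (Y * V)).trace := by
      rw [show Yᵀ * (Y * V * Vᵀ) = (Yᵀ * Y * V) * Vᵀ by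
        simp only [Matrix.mul_assoc], Matrix.trace_mul_comm]
      simp only [Matrix.transpose_mul, Matrix.mul_assoc]
    have h2 : ((Y * V * Vᵀ)ᵀ * Y).trace = ((Y * V)ᵀ * (Y * V)).trace := by
      simp only [Matrix.transpose_mul, Matrix.transpose_transpose]
      rw [show V * (Vᵀ * Yᵀ) * Y = V * (Vᵀ * Yᵀ * Y) by simp only [Matrix.mul_assoc],
        Matrix.trace_mul_comm]
      simp only [Matrix.mul_assoc]
    have h3 : ((Y * V * Vᵀ)ᵀ * (Y * V * Vᵀ)).trace = ((Y * V)ᵀ * (Y * V)).trace := by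
      simp only [Matrix.transpose_mul, Matrix.transpose_transpose]
      rw [show V * (Vᵀ * Yᵀ) * (Y * V * Vᵀ) = V * (Vᵀ * Yᵀ * (Y * V * Vᵀ)) by
        simp only [Matrix.mul_assoc], Matrix.trace_mul_comm]
      rw [show Vᵀ * Yᵀ * (Y * V * Vᵀ) * V = Vᵀ * Yᵀ * (Y * V) * (Vᵀ * V) by
        simp only [Matrix.mul_assoc], hV, Matrix.mul_one]
    simp only [Matrix.trace_add, Matrix.trace_sub, h1, h2, h3]
    ring
  linarith [frobSq_nonneg (Y - Y * V * Vᵀ)]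

lemma frobNorm_le_norm21 {p k : ℕ} (A : Matrix (Fin p) (Fin k) ℝ) :
    frobNorm A ≤ norm21 A := by
  have h1 : frobSq A = ∑ i, (eNorm (A i)) ^ 2 := by
    apply Finset.sum_congr rfl
    intro i _
    rw [eNorm, Real.sq_sqrt]
    apply Finset.sum_nonneg; intro j _; positivity
  have h2 : frobSq A ≤ (norm21 A) ^ 2 := by
    rw [h1, norm21]
    exact Finset.sum_sq_le_sq_sum_of_nonneg (fun i _ => Real.sqrt_nonneg _)
  calc frobNorm A = Real.sqrt (frobSq A) := rfl
    _ ≤ Real.sqrt ((norm21 A) ^ 2) := Real.sqrt_le_sqrt h2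
    _ = norm21 A := Real.sqrt_sq (norm21_nonneg A)

/-- Lemma 3 (uniform boundedness of the iterates of the RCGL algorithm). -/
theorem stmt14 {m n p k : ℕ} (lam : ℝ) (hlam : 0 < lam) (hk : 1 ≤ k) (hkn : k ≤ n)
    (Y : Matrix (Fin m) (Fin n) ℝ) (X : Matrix (Fin m) (Fin p) ℝ)
    (S : ℕ → Matrix (Fin p) (Fin k) ℝ) (V : ℕ → Matrix (Fin n) (Fin k) ℝ)
    (hV : ∀ j, IsOrthCol (V j))
    (hSmin : ∀ j, ∀ S' : Matrix (Fin p) (Fin k) ℝ,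
      (1 / 2) * frobSq (Y * V j - X * S (j + 1)) + lam * norm21 (S (j + 1)) ≤
        (1 / 2) * frobSq (Y * V j - X * S') + lam * norm21 S')
    (hVmax : ∀ j, ∀ V' : Matrix (Fin n) (Fin k) ℝ, IsOrthCol V' →
      ((Yᵀ * X * S (j + 1))ᵀ * V').trace ≤ ((Yᵀ * X * S (j + 1))ᵀ * V (j + 1)).trace) :
    (∀ j, 1 ≤ j → lam * norm21 (S j) ≤ (1 / 2) * frobSq Y) ∧
    ∃ C : ℝ, ∀ j, 1 ≤ j → frobNorm (S j) ≤ C ∧ frobNorm (V j) ≤ C ∧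
      frobNorm (S j * (V j)ᵀ) ≤ C := by
  have main : ∀ j, 1 ≤ j → lam * norm21 (S j) ≤ (1 / 2) * frobSq Y := by
    intro j hj
    obtain ⟨j', rfl⟩ : ∃ j', j = j' + 1 := ⟨j - 1, (Nat.succ_pred_eq_of_pos hj).symm⟩
    have h := hSmin j' 0
    simp only [Matrix.mul_zero, sub_zero, norm21_zero, mul_zero, add_zero] at h
    have h2 : frobSq (Y * V j') ≤ frobSq Y := frobSq_mul_orth_le Y (V j') (hV j')
    have h3 : 0 ≤ frobSq (Y * V j' - X * S (j' + 1)) :=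
      frobSq_nonneg _
    linarith
  refine ⟨main, max ((1 / 2) * frobSq Y / lam) (Real.sqrt k), ?_⟩
  intro j hj
  have hS : frobNorm (S j) ≤ (1 / 2) * frobSq Y / lam := by
    have := main j hj
    have h1 : frobNorm (S j) ≤ norm21 (S j) := frobNorm_le_norm21 _
    rw [le_div_iff₀ hlam]
    nlinarith
  have hfV : frobSq (V j) = (k : ℝ) := by
    rw [frobSq_eq_trace, hV j]
    simp [Matrix.trace_one]
  have hVn : frobNorm (V j) = Real.sqrt k := by rw [frobNorm, hfV]
  have hSV : frobSq (S j * (V j)ᵀ) = frobSq (S j) := by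
    rw [frobSq_eq_trace, frobSq_eq_trace]
    simp only [Matrix.transpose_mul, Matrix.transpose_transpose]
    rw [show V j * (S j)ᵀ * (S j * (V j)ᵀ) = V j * ((S j)ᵀ * (S j * (V j)ᵀ)) by
      simp only [Matrix.mul_assoc], Matrix.trace_mul_comm]
    rw [show (S j)ᵀ * (S j * (V j)ᵀ) * V j = (S j)ᵀ * S j * ((V j)ᵀ * V j) by
      simp only [Matrix.mul_assoc], hV j, Matrix.mul_one]
  refine ⟨le_trans hS (le_max_left _ _), hVn ▸ le_max_right _ _, ?_⟩
  have : frobNorm (S j * (V j)ᵀ) = frobNorm (S j) := by rw [frobNorm, hSV, frobNorm]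
  rw [this]
  exact le_trans hS (le_max_left _ _)

end
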